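/- arXiv:2504.15065 — 5 statements merged into one kernel-verified Lean document; each statement's English description precedes it below -/
import Mathlib

section
/- The polynomial F = (p2*q1 - p1*q2)^2 - (2*q1^4 + 2*q1^2*q2^2 + 2*a*q1^2 + p1^2)*(a-b) is a first integral of the Hamiltonian system with Hamiltonian H = (p1^2+p2^2)/2 + (q1^2+q2^2)^2 + a*q1^2 + b*q2^2, i.e., the Poisson bracket {H, F} = H_{p1} F_{q1} + H_{p2} F_{q2} - H_{q1} F_{p1} - H_{q2} F_{p2} vanishes identically. -/
/-- `F` is a first integral of the Vanhaecke system: the Poisson bracket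
`{H,F} = H_{p1} F_{q1} + H_{p2} F_{q2} - H_{q1} F_{p1} - H_{q2} F_{p2}`
vanishes identically. -/
theorem vanhaecke_F_first_integral (a b : ℝ) (H F : ℝ → ℝ → ℝ → ℝ → ℝ)
    (hH : ∀ q1 q2 p1 p2, H q1 q2 p1 p2 =
      (p1^2+p2^2)/2 + (q1^2+q2^2)^2 + a*q1^2 + b*q2^2)
    (hF : ∀ q1 q2 p1 p2, F q1 q2 p1 p2 =
      (p2*q1 - p1*q2)^2 - (2*q1^4 + 2*q1^2*q2^2 + 2*a*q1^2 + p1^2)*(a-b)) :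
    ∀ q1 q2 p1 p2 : ℝ,
      deriv (fun x => H q1 q2 x p2) p1 * deriv (fun x => F x q2 p1 p2) q1
      + deriv (fun x => H q1 q2 p1 x) p2 * deriv (fun x => F q1 x p1 p2) q2
      - deriv (fun x => H x q2 p1 p2) q1 * deriv (fun x => F q1 q2 x p2) p1
      - deriv (fun x => H q1 x p1 p2) q2 * deriv (fun x => F q1 q2 p1 x) p2 = 0 := by
  intro q1 q2 p1 p2
  have H_p1 : deriv (fun x => H q1 q2 x p2) p1 = p1 := by
    simp (disch := fun_prop) [hH]; ring
  have H_p2 : deriv (fun x => H q1 q2 p1 x) p2 = p2 := by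
    simp (disch := fun_prop) [hH]; ring
  have H_q1 : deriv (fun x => H x q2 p1 p2) q1 = 4*q1*(q1^2+q2^2) + 2*a*q1 := by
    simp (disch := fun_prop) [hH]; ring
  have H_q2 : deriv (fun x => H q1 x p1 p2) q2 = 4*q2*(q1^2+q2^2) + 2*b*q2 := by
    simp (disch := fun_prop) [hH]; ring
  have F_q1 : deriv (fun x => F x q2 p1 p2) q1 =
      2*p2*(p2*q1 - p1*q2) - (8*q1^3 + 4*q1*q2^2 + 4*a*q1)*(a-b) := by
    simp (disch := fun_prop) [hF]; ring
  have F_q2 : deriv (fun x => F q1 x p1 p2) q2 = -2*p1*(p2*q1 - p1*q2) - 4*q1^2*q2*(a-b) := by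
    simp (disch := fun_prop) [hF]; ring
  have F_p1 : deriv (fun x => F q1 q2 x p2) p1 = -2*q2*(p2*q1 - p1*q2) - 2*p1*(a-b) := by
    simp (disch := fun_prop) [hF]; ring
  have F_p2 : deriv (fun x => F q1 q2 p1 x) p2 = 2*q1*(p2*q1 - p1*q2) := by
    simp (disch := fun_prop) [hF]; ring
  rw [H_p1, H_p2, H_q1, H_q2, F_q1, F_q2, F_p1, F_p2]
  ring
end

section
/- The polynomial G = (p2*q1 - p1*q2)^2 + (2*q1^2*q2^2 + 2*q2^4 + 2*b*q2^2 + p2^2)*(a-b) is a first integral of the Vanhaecke system: the Poisson bracket {H, G} vanishes identically, where H = (p1^2+p2^2)/2 + (q1^2+q2^2)^2 + a*q1^2 + b*q2^2. -/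
/-!
With `L = p2*q1 - p1*q2`, the rotation-invariant quartic term drops out of `{H, L}`, leaving
`{H, L} = 2*(a-b)*q1*q2`; the correction term `(2*q1^2*q2^2 + 2*q2^4 + 2*b*q2^2 + p2^2)*(a-b)`
is built so that its bracket with `H` cancels `{H, L^2} = 4*(a-b)*q1*q2*L`.
-/

namespace Vanhaecke

noncomputable def hamiltonian (a b q1 q2 p1 p2 : ℝ) : ℝ :=
  (p1^2+p2^2)/2 + (q1^2+q2^2)^2 + a*q1^2 + b*q2^2

def firstIntegral (a b q1 q2 p1 p2 : ℝ) : ℝ :=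
  (p2*q1 - p1*q2)^2 + (2*q1^2*q2^2 + 2*q2^4 + 2*b*q2^2 + p2^2)*(a-b)

section PartialDerivatives

variable (a b q1 q2 p1 p2 : ℝ)

theorem deriv_hamiltonian_q1 :
    deriv (fun x => hamiltonian a b x q2 p1 p2) q1 = 4*q1*(q1^2+q2^2) + 2*a*q1 := by
  simp (disch := fun_prop) [hamiltonian, deriv_fun_add, deriv_fun_mul, deriv_fun_pow]
  ring

theorem deriv_hamiltonian_q2 :
    deriv (fun x => hamiltonian a b q1 x p1 p2) q2 = 4*q2*(q1^2+q2^2) + 2*b*q2 := by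
  simp (disch := fun_prop) [hamiltonian, deriv_fun_add, deriv_fun_mul, deriv_fun_pow]
  ring

theorem deriv_hamiltonian_p1 : deriv (fun x => hamiltonian a b q1 q2 x p2) p1 = p1 := by
  simp (disch := fun_prop) [hamiltonian, deriv_fun_add, deriv_fun_pow]
  ring

theorem deriv_hamiltonian_p2 : deriv (fun x => hamiltonian a b q1 q2 p1 x) p2 = p2 := by
  simp (disch := fun_prop) [hamiltonian, deriv_fun_add, deriv_fun_pow]
  ring

theorem deriv_firstIntegral_q1 :
    deriv (fun x => firstIntegral a b x q2 p1 p2) q1 =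
      2*p2*(p2*q1 - p1*q2) + 4*q1*q2^2*(a-b) := by
  simp (disch := fun_prop) [firstIntegral, deriv_fun_add, deriv_fun_sub, deriv_fun_mul,
    deriv_fun_pow]
  ring

theorem deriv_firstIntegral_q2 :
    deriv (fun x => firstIntegral a b q1 x p1 p2) q2 =
      -2*p1*(p2*q1 - p1*q2) + (4*q1^2*q2 + 8*q2^3 + 4*b*q2)*(a-b) := by
  simp (disch := fun_prop) [firstIntegral, deriv_fun_add, deriv_fun_mul, deriv_fun_pow]
  ring

theorem deriv_firstIntegral_p1 :
    deriv (fun x => firstIntegral a b q1 q2 x p2) p1 = -2*q2*(p2*q1 - p1*q2) := by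
  simp (disch := fun_prop) [firstIntegral, deriv_fun_add, deriv_fun_sub, deriv_fun_mul,
    deriv_fun_pow]
  ring

theorem deriv_firstIntegral_p2 :
    deriv (fun x => firstIntegral a b q1 q2 p1 x) p2 =
      2*q1*(p2*q1 - p1*q2) + 2*p2*(a-b) := by
  simp (disch := fun_prop) [firstIntegral, deriv_fun_add, deriv_fun_sub, deriv_fun_mul,
    deriv_fun_pow]
  ring

end PartialDerivatives

end Vanhaecke

open Vanhaecke in
/-- `G` is a first integral of the Vanhaecke system: the Poisson bracket
`{H,G}` vanishes identically. -/
theorem vanhaecke_G_first_integral (a b : ℝ) (H G : ℝ → ℝ → ℝ → ℝ → ℝ)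
    (hH : ∀ q1 q2 p1 p2, H q1 q2 p1 p2 =
      (p1^2+p2^2)/2 + (q1^2+q2^2)^2 + a*q1^2 + b*q2^2)
    (hG : ∀ q1 q2 p1 p2, G q1 q2 p1 p2 =
      (p2*q1 - p1*q2)^2 + (2*q1^2*q2^2 + 2*q2^4 + 2*b*q2^2 + p2^2)*(a-b)) :
    ∀ q1 q2 p1 p2 : ℝ,
      deriv (fun x => H q1 q2 x p2) p1 * deriv (fun x => G x q2 p1 p2) q1
      + deriv (fun x => H q1 q2 p1 x) p2 * deriv (fun x => G q1 x p1 p2) q2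
      - deriv (fun x => H x q2 p1 p2) q1 * deriv (fun x => G q1 q2 x p2) p1
      - deriv (fun x => H q1 x p1 p2) q2 * deriv (fun x => G q1 q2 p1 x) p2 = 0 := by
  obtain rfl : H = hamiltonian a b := by funext q1 q2 p1 p2; exact hH q1 q2 p1 p2
  obtain rfl : G = firstIntegral a b := by funext q1 q2 p1 p2; exact hG q1 q2 p1 p2
  intro q1 q2 p1 p2
  rw [deriv_hamiltonian_q1, deriv_hamiltonian_q2, deriv_hamiltonian_p1, deriv_hamiltonian_p2,
    deriv_firstIntegral_q1, deriv_firstIntegral_q2, deriv_firstIntegral_p1,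
    deriv_firstIntegral_p2]
  ring
end

section
/- The two first integrals F and G of the Vanhaecke system are in involution: their Poisson bracket {F, G} = F_{p1} G_{q1} + F_{p2} G_{q2} − F_{q1} G_{p1} − F_{q2} G_{p2} vanishes identically as a polynomial. -/
def vanhaeckeF (a b q1 q2 p1 p2 : ℝ) : ℝ :=
  (p2*q1 - p1*q2)^2 - (2*q1^4 + 2*q1^2*q2^2 + 2*a*q1^2 + p1^2)*(a-b)

def vanhaeckeG (a b q1 q2 p1 p2 : ℝ) : ℝ :=
  (p2*q1 - p1*q2)^2 + (2*q1^2*q2^2 + 2*q2^4 + 2*b*q2^2 + p2^2)*(a-b)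

section PartialDerivatives

variable (a b q1 q2 p1 p2 : ℝ)

theorem deriv_vanhaeckeF_q1 :
    deriv (fun x => vanhaeckeF a b x q2 p1 p2) q1 =
      2*p2*(p2*q1 - p1*q2) - (8*q1^3 + 4*q1*q2^2 + 4*a*q1)*(a-b) := by
  simp (disch := fun_prop) [vanhaeckeF, deriv_fun_add, deriv_fun_sub, deriv_fun_mul, deriv_fun_pow]
  ring

theorem deriv_vanhaeckeF_q2 :
    deriv (fun x => vanhaeckeF a b q1 x p1 p2) q2 =
      -2*p1*(p2*q1 - p1*q2) - 4*q1^2*q2*(a-b) := by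
  simp (disch := fun_prop) [vanhaeckeF, deriv_fun_add, deriv_fun_sub, deriv_fun_mul, deriv_fun_pow]
  ring

theorem deriv_vanhaeckeF_p1 :
    deriv (fun x => vanhaeckeF a b q1 q2 x p2) p1 =
      -2*q2*(p2*q1 - p1*q2) - 2*p1*(a-b) := by
  simp (disch := fun_prop) [vanhaeckeF, deriv_fun_add, deriv_fun_sub, deriv_fun_mul, deriv_fun_pow]
  ring

theorem deriv_vanhaeckeF_p2 :
    deriv (fun x => vanhaeckeF a b q1 q2 p1 x) p2 = 2*q1*(p2*q1 - p1*q2) := by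
  simp (disch := fun_prop) [vanhaeckeF, deriv_fun_add, deriv_fun_sub, deriv_fun_mul, deriv_fun_pow]
  ring

theorem deriv_vanhaeckeG_q1 :
    deriv (fun x => vanhaeckeG a b x q2 p1 p2) q1 =
      2*p2*(p2*q1 - p1*q2) + 4*q1*q2^2*(a-b) := by
  simp (disch := fun_prop) [vanhaeckeG, deriv_fun_add, deriv_fun_sub, deriv_fun_mul, deriv_fun_pow]
  ring

theorem deriv_vanhaeckeG_q2 :
    deriv (fun x => vanhaeckeG a b q1 x p1 p2) q2 =
      -2*p1*(p2*q1 - p1*q2) + (4*q1^2*q2 + 8*q2^3 + 4*b*q2)*(a-b) := by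
  simp (disch := fun_prop) [vanhaeckeG, deriv_fun_add, deriv_fun_sub, deriv_fun_mul, deriv_fun_pow]
  ring

theorem deriv_vanhaeckeG_p1 :
    deriv (fun x => vanhaeckeG a b q1 q2 x p2) p1 = -2*q2*(p2*q1 - p1*q2) := by
  simp (disch := fun_prop) [vanhaeckeG, deriv_fun_add, deriv_fun_sub, deriv_fun_mul, deriv_fun_pow]
  ring

theorem deriv_vanhaeckeG_p2 :
    deriv (fun x => vanhaeckeG a b q1 q2 p1 x) p2 =
      2*q1*(p2*q1 - p1*q2) + 2*p2*(a-b) := by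
  simp (disch := fun_prop) [vanhaeckeG, deriv_fun_add, deriv_fun_sub, deriv_fun_mul, deriv_fun_pow]
  ring

end PartialDerivatives

/-- The integrals `F` and `G` of the Vanhaecke system are in involution:
`{F,G} = F_{p1} G_{q1} + F_{p2} G_{q2} - F_{q1} G_{p1} - F_{q2} G_{p2} = 0`. -/
theorem vanhaecke_F_G_involution (a b : ℝ) (F G : ℝ → ℝ → ℝ → ℝ → ℝ)
    (hF : ∀ q1 q2 p1 p2, F q1 q2 p1 p2 =
      (p2*q1 - p1*q2)^2 - (2*q1^4 + 2*q1^2*q2^2 + 2*a*q1^2 + p1^2)*(a-b))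
    (hG : ∀ q1 q2 p1 p2, G q1 q2 p1 p2 =
      (p2*q1 - p1*q2)^2 + (2*q1^2*q2^2 + 2*q2^4 + 2*b*q2^2 + p2^2)*(a-b)) :
    ∀ q1 q2 p1 p2 : ℝ,
      deriv (fun x => F q1 q2 x p2) p1 * deriv (fun x => G x q2 p1 p2) q1
      + deriv (fun x => F q1 q2 p1 x) p2 * deriv (fun x => G q1 x p1 p2) q2
      - deriv (fun x => F x q2 p1 p2) q1 * deriv (fun x => G q1 q2 x p2) p1
      - deriv (fun x => F q1 x p1 p2) q2 * deriv (fun x => G q1 q2 p1 x) p2 = 0 := by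
  obtain rfl : F = vanhaeckeF a b := by
    funext q1 q2 p1 p2
    exact hF q1 q2 p1 p2
  obtain rfl : G = vanhaeckeG a b := by
    funext q1 q2 p1 p2
    exact hG q1 q2 p1 p2
  intro q1 q2 p1 p2
  rw [deriv_vanhaeckeF_p1, deriv_vanhaeckeF_p2, deriv_vanhaeckeF_q1, deriv_vanhaeckeF_q2,
    deriv_vanhaeckeG_p1, deriv_vanhaeckeG_p2, deriv_vanhaeckeG_q1, deriv_vanhaeckeG_q2]
  ring
end

section
/- Let f : ℝ × ℝ → ℝ be continuous with common periods (ω1, ω2) and (ω1', ω2'), and suppose ω1/ω1' is irrational. Then the closure of the curve {(f1(0,t), f2(0,t)) : t ∈ ℝ} contains the full image surface {(f1(u,v), f2(u,v)) : (u,v) ∈ ℝ²}, where f1, f2 are continuous functions each having (ω1, ω2) and (ω1', ω2') as common periods, provided f1, f2 are uniformly continuous. -/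
/-!
The pair `F = (f1, f2)` is invariant under the additive group `P` generated by the two period
vectors. Because `ω1 / ω1'` is irrational, the first coordinates of `P` are dense in `ℝ`, so the
translates by `P` of the line `u = 0` are dense in the plane. Every value of `F` is thus a limit of
values of `F` on translates of that line, which are values of `F` on the line itself.
-/

open Function Set
open scoped Pointwise

def periodAddSubgroup {G β : Type*} [AddGroup G] (F : G → β) : AddSubgroup G where
  carrier := {p | Periodic F p}
  zero_mem' _ := by rw [add_zero]
  add_mem' := Periodic.add_period
  neg_mem' := Periodic.neg

theorem range_subset_closure_image_of_dense_add_periods {G β : Type*} [AddGroup G]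
    [TopologicalSpace G] [TopologicalSpace β] {F : G → β} (hF : Continuous F) {A P : Set G}
    (hP : ∀ p ∈ P, Periodic F p) (hAP : Dense (A + P)) : range F ⊆ closure (F '' A) := by
  have hshift : F '' (A + P) ⊆ F '' A := by
    rintro _ ⟨_, ⟨a, ha, p, hp, rfl⟩, rfl⟩
    exact ⟨a, ha, (hP p hp a).symm⟩
  calc range F = F '' closure (A + P) := by rw [hAP.closure_eq, image_univ]
    _ ⊆ closure (F '' (A + P)) := image_closure_subset_closure_image hF
    _ ⊆ closure (F '' A) := closure_mono hshift

theorem dense_zero_prod_univ_add {α β : Type*} [AddGroup α] [AddGroup β] [TopologicalSpace α]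
    [TopologicalSpace β] {P : Set (α × β)} (hP : Dense (Prod.fst '' P)) :
    Dense (({0} : Set α) ×ˢ (univ : Set β) + P) := by
  refine (hP.prod dense_univ).mono ?_
  rintro ⟨_, y⟩ ⟨⟨p, hp, rfl⟩, -⟩
  exact ⟨(0, y - p.2), ⟨rfl, trivial⟩, p, hp, Prod.ext (zero_add _) (sub_add_cancel _ _)⟩

theorem fst_image_addSubgroupClosure_pair {α β : Type*} [AddGroup α] [AddGroup β] (a b : α × β) :
    Prod.fst '' (AddSubgroup.closure {a, b} : Set (α × β)) = AddSubgroup.closure {a.1, b.1} := by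
  rw [← AddMonoidHom.coe_fst, ← AddSubgroup.coe_map, AddMonoidHom.map_closure, image_pair]

theorem curve_closure_contains_surface_general (f1 f2 : ℝ × ℝ → ℝ)
    (hf1 : UniformContinuous f1) (hf2 : UniformContinuous f2)
    (ω1 ω2 ω1' ω2' : ℝ)
    (hirr : Irrational (ω1 / ω1'))
    (hper1 : ∀ u v : ℝ, f1 (u + ω1, v + ω2) = f1 (u, v))
    (hper1' : ∀ u v : ℝ, f1 (u + ω1', v + ω2') = f1 (u, v))
    (hper2 : ∀ u v : ℝ, f2 (u + ω1, v + ω2) = f2 (u, v))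
    (hper2' : ∀ u v : ℝ, f2 (u + ω1', v + ω2') = f2 (u, v)) :
    {p : ℝ × ℝ | ∃ u v : ℝ, p = (f1 (u, v), f2 (u, v))} ⊆
      closure {p : ℝ × ℝ | ∃ t : ℝ, p = (f1 (0, t), f2 (0, t))} := by
  set F : ℝ × ℝ → ℝ × ℝ := fun x ↦ (f1 x, f2 x)
  set P := AddSubgroup.closure {((ω1, ω2) : ℝ × ℝ), (ω1', ω2')}
  have hperiods : P ≤ periodAddSubgroup F := by
    rw [AddSubgroup.closure_le, pair_subset_iff]
    exact ⟨fun x ↦ Prod.ext (hper1 x.1 x.2) (hper2 x.1 x.2),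
      fun x ↦ Prod.ext (hper1' x.1 x.2) (hper2' x.1 x.2)⟩
  have hdense : Dense (Prod.fst '' (P : Set (ℝ × ℝ))) := by
    rw [fst_image_addSubgroupClosure_pair]
    exact dense_addSubgroupClosure_pair_iff.2 hirr
  have hsurface := range_subset_closure_image_of_dense_add_periods
    (hf1.continuous.prodMk hf2.continuous) (fun p hp ↦ hperiods hp)
    (dense_zero_prod_univ_add hdense)
  rintro _ ⟨u, v, rfl⟩
  refine closure_mono ?_ (hsurface ⟨(u, v), rfl⟩)
  rintro _ ⟨⟨_, t⟩, ⟨rfl, -⟩, rfl⟩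
  exact ⟨t, rfl⟩

/-- If `f1, f2 : ℝ² → ℝ` are uniformly continuous with common period pairs
`(ω1, ω2)` and `(ω1', ω2')` and `ω1/ω1'` is irrational, then the closure of the
curve `t ↦ (f1(0,t), f2(0,t))` contains the whole image surface
`{(f1(u,v), f2(u,v))}`. -/
theorem curve_closure_contains_surface (f1 f2 : ℝ × ℝ → ℝ)
    (hf1 : UniformContinuous f1) (hf2 : UniformContinuous f2)
    (ω1 ω2 ω1' ω2' : ℝ) (hω1 : ω1 ≠ 0) (hω1' : ω1' ≠ 0)
    (hirr : Irrational (ω1 / ω1'))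
    (hper1 : ∀ u v : ℝ, f1 (u + ω1, v + ω2) = f1 (u, v))
    (hper1' : ∀ u v : ℝ, f1 (u + ω1', v + ω2') = f1 (u, v))
    (hper2 : ∀ u v : ℝ, f2 (u + ω1, v + ω2) = f2 (u, v))
    (hper2' : ∀ u v : ℝ, f2 (u + ω1', v + ω2') = f2 (u, v)) :
    {p : ℝ × ℝ | ∃ u v : ℝ, p = (f1 (u, v), f2 (u, v))} ⊆
      closure {p : ℝ × ℝ | ∃ t : ℝ, p = (f1 (0, t), f2 (0, t))} :=
  curve_closure_contains_surface_general f1 f2 hf1 hf2 ω1 ω2 ω1' ω2' hirr hper1 hper1' hper2 hper2'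
end

section
/- Restricting the projection polynomial s2·p1^4 + s1·p1^2 + s0 (the projection of the Vanhaecke integral surface into q1 q2 p1 space) to the plane q1 = 0 yields a perfect square: s2 p1^4 + s1 p1^2 + s0 |_{q1=0} = (p1^2 q2^2 - a p1^2 + b p1^2 - f)^2 (a - b)^2, i.e., the coordinate plane q1 = 0 is a double line of the projected surface. -/
/-- The projection of the Vanhaecke integral surface into `q1 q2 p1` space,
obtained by eliminating `p2` from `F = f`, `G = g`, is
`Π = (Q q1² + (a-b)(p1² q2² - f - (a-b)A))² - 4 Q q1² (a-b) p1² q2²` with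
`A = 2q1⁴ + 2q1²q2² + 2a q1² + p1²`, `B = 2q1²q2² + 2q2⁴ + 2b q2²`,
`Q = g - f - (a-b)(A + B)`; it is a quartic `s2 p1⁴ + s1 p1² + s0` in `p1`.
Restricted to the plane `q1 = 0` it becomes the perfect square
`(p1² q2² - a p1² + b p1² - f)² (a-b)²`. -/
theorem vanhaecke_projection_double_line (a b f g : ℝ) :
    -- the elimination polynomial is correct: it vanishes on the surface
    (∀ q1 q2 p1 p2 : ℝ,
      (p2*q1 - p1*q2)^2 - (2*q1^4 + 2*q1^2*q2^2 + 2*a*q1^2 + p1^2)*(a-b) = f →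
      (p2*q1 - p1*q2)^2 + (2*q1^2*q2^2 + 2*q2^4 + 2*b*q2^2 + p2^2)*(a-b) = g →
      ((g - f - (a-b)*((2*q1^4 + 2*q1^2*q2^2 + 2*a*q1^2 + p1^2)
            + (2*q1^2*q2^2 + 2*q2^4 + 2*b*q2^2)))*q1^2
        + (a-b)*(p1^2*q2^2 - f
            - (a-b)*(2*q1^4 + 2*q1^2*q2^2 + 2*a*q1^2 + p1^2)))^2
      - 4*(g - f - (a-b)*((2*q1^4 + 2*q1^2*q2^2 + 2*a*q1^2 + p1^2)
            + (2*q1^2*q2^2 + 2*q2^4 + 2*b*q2^2)))*q1^2*(a-b)*p1^2*q2^2 = 0)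
    ∧
    -- restricted to q1 = 0 it is the stated perfect square
    (∀ q2 p1 : ℝ,
      ((g - f - (a-b)*((2*(0:ℝ)^4 + 2*0^2*q2^2 + 2*a*0^2 + p1^2)
            + (2*0^2*q2^2 + 2*q2^4 + 2*b*q2^2)))*(0:ℝ)^2
        + (a-b)*(p1^2*q2^2 - f
            - (a-b)*(2*(0:ℝ)^4 + 2*0^2*q2^2 + 2*a*0^2 + p1^2)))^2
      - 4*(g - f - (a-b)*((2*(0:ℝ)^4 + 2*0^2*q2^2 + 2*a*0^2 + p1^2)
            + (2*0^2*q2^2 + 2*q2^4 + 2*b*q2^2)))*(0:ℝ)^2*(a-b)*p1^2*q2^2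
      = (p1^2*q2^2 - a*p1^2 + b*p1^2 - f)^2 * (a-b)^2) := by
  constructor
  · intro q1 q2 p1 p2 hF hG
    subst hF hG
    ring
  · intro q2 p1
    ring
end
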